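/- In the recursive max-linear model with propagating noise, if the deterministic coefficients satisfy b_{ji} = ⋁_{k ∈ de(j)∩an(i)} b_{jk} b_{ki} / b_{kk} (i.e., the edge j → i is not needed), then almost surely the random coefficients satisfy b̄_{ji} = ⋁_{k ∈ de(j)∩an(i)} b̄_{jk} b̄_{ki} / b̄_{kk}. -/

import Mathlib

open Matrix Finset MeasureTheory ProbabilityTheory Filter

noncomputable section

/-- Max-times (tropical) matrix product: `(F ⊙ G) i j = ⋁ k, F i k * G k j`. -/
def mOdot {m n p : ℕ} (F : Matrix (Fin m) (Fin n) NNReal) (G : Matrix (Fin n) (Fin p) NNReal) :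
    Matrix (Fin m) (Fin p) NNReal :=
  Matrix.of fun i j => Finset.univ.sup fun k => F i k * G k j

/-- Entrywise maximum of two matrices. -/
def mSup {m n : ℕ} (A B : Matrix (Fin m) (Fin n) NNReal) : Matrix (Fin m) (Fin n) NNReal :=
  Matrix.of fun i j => A i j ⊔ B i j

/-- Max-times power: `A^{⊙0} = I`, `A^{⊙(k+1)} = A^{⊙k} ⊙ A`. -/
def mPow {d : ℕ} (A : Matrix (Fin d) (Fin d) NNReal) : ℕ → Matrix (Fin d) (Fin d) NNReal
  | 0 => 1
  | k + 1 => mOdot (mPow A k) A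

/-- Kleene star: `B = ⋁_{k=0}^{d-1} C^{⊙k}`. -/
def kleene {d : ℕ} (C : Matrix (Fin d) (Fin d) NNReal) : Matrix (Fin d) (Fin d) NNReal :=
  Matrix.of fun i j => (Finset.range d).sup fun k => mPow C k i j

/-- `IsWalk C i j l` : `l` is the list of vertices after `i` of a walk from `i` to `j`
    along positive entries of `C`. -/
def IsWalk {d : ℕ} (C : Matrix (Fin d) (Fin d) NNReal) : Fin d → Fin d → List (Fin d) → Prop
  | i, j, [] => i = j
  | i, j, k :: l => 0 < C i k ∧ IsWalk C k j l

/-- Deterministic path weight: product of edge weights along a walk. -/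
def walkWeight {d : ℕ} (C : Matrix (Fin d) (Fin d) NNReal) : Fin d → List (Fin d) → NNReal
  | _, [] => 1
  | i, k :: l => C i k * walkWeight C k l

/-- Acyclicity: the only walk from a vertex to itself is the empty one. -/
def Acyclic {d : ℕ} (C : Matrix (Fin d) (Fin d) NNReal) : Prop :=
  ∀ i l, IsWalk C i i l → l = []

/-- Non-noisy ML coefficient: maximal deterministic path weight from `j` to `i`
    (`1` on the diagonal; `0` if there is no path). -/
def detB {d : ℕ} (C : Matrix (Fin d) (Fin d) NNReal) (j i : Fin d) : NNReal :=
  sSup {w | ∃ l, IsWalk C j i l ∧ w = walkWeight C j l}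

/-- Noisy path weight (without the initial noise factor `ε j`):
    `∏_l c_{k_l k_{l+1}} ε_{k_{l+1}}` along a walk. -/
def noisyWeight {d : ℕ} (C : Matrix (Fin d) (Fin d) NNReal) (ε : Fin d → NNReal) :
    Fin d → List (Fin d) → NNReal
  | _, [] => 1
  | i, k :: l => C i k * ε k * noisyWeight C ε k l

/-- Random (noisy) ML coefficient `b̄_{ji}`: maximal random path weight
    `d̄_{ji}(p) = ε_j ∏ c ε` from `j` to `i`; equals `ε j` on the diagonal,
    `0` if `j` is not an ancestor of `i`. -/
def barB {d : ℕ} (C : Matrix (Fin d) (Fin d) NNReal) (ε : Fin d → NNReal) (j i : Fin d) :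
    NNReal :=
  sSup {w | ∃ l, IsWalk C j i l ∧ w = ε j * noisyWeight C ε j l}

/-- `j` is a strict ancestor of `i` (there exists a nonempty path). -/
def Reach {d : ℕ} (C : Matrix (Fin d) (Fin d) NNReal) (j i : Fin d) : Prop :=
  ∃ l, l ≠ [] ∧ IsWalk C j i l

/-- Max-times product of a row vector with a matrix. -/
def vOdot {d : ℕ} (x : Fin d → NNReal) (A : Matrix (Fin d) (Fin d) NNReal) : Fin d → NNReal :=
  fun j => Finset.univ.sup fun k => x k * A k j

/-- Componentwise maximum of two vectors. -/
def vSup {d : ℕ} (x y : Fin d → NNReal) : Fin d → NNReal := fun i => x i ⊔ y i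

/-- Maximum of `f k` over all `k` satisfying `P` (0 if there is none). -/
def supOver {d : ℕ} (P : Fin d → Prop) (f : Fin d → NNReal) : NNReal :=
  sSup {w | ∃ k, P k ∧ w = f k}

end

/-!
A random path weight `ε_j ∏ c ε` dominates the deterministic one times the noise at both
ends, and concatenating paths through `k` multiplies the random weights while counting `ε_k`
twice. So every path `j → ⋯ → i` through an intermediate vertex `k` is bounded by the `k`-term
`b̄_{jk} b̄_{ki} / b̄_{kk}`, and conversely each such term is the weight of a concatenated path.
The only remaining path is the edge `j → i`; the deterministic identity gives
`c_{ji} ≤ b_{ji} = b_{jk} b_{ki}` for some intermediate `k`, and multiplying by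
`ε_j ε_i = ε_j ε_k ε_i / ε_k` turns this into a bound by the random `k`-term.
-/

section SSupSetOf

variable {α β : Type*} {P : α → Prop}

theorem finite_setOf_exists_and_eq (f : α → β) (hP : {x | P x}.Finite) :
    {w | ∃ x, P x ∧ w = f x}.Finite :=
  (hP.image f).subset (by rintro _ ⟨y, hy, rfl⟩; exact ⟨y, hy, rfl⟩)

theorem le_sSup_setOf_of_finite [ConditionallyCompleteLattice β] (f : α → β)
    (hP : {x | P x}.Finite) {x : α} (hx : P x) :
    f x ≤ sSup {w | ∃ x, P x ∧ w = f x} :=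
  le_csSup (finite_setOf_exists_and_eq f hP).bddAbove ⟨x, hx, rfl⟩

theorem exists_sSup_setOf_eq_of_finite [ConditionallyCompleteLinearOrder β] (f : α → β)
    (hP : {x | P x}.Finite) (hne : ∃ x, P x) : ∃ x, P x ∧ sSup {w | ∃ x, P x ∧ w = f x} = f x := by
  obtain ⟨x₀, hx₀⟩ := hne
  have hS : {w | ∃ x, P x ∧ w = f x}.Nonempty := ⟨f x₀, x₀, hx₀, rfl⟩
  exact hS.csSup_mem (finite_setOf_exists_and_eq f hP)

end SSupSetOf

section Walks

variable {d : ℕ} {C : Matrix (Fin d) (Fin d) NNReal}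

theorem IsWalk.append {i j k : Fin d} {l₁ l₂ : List (Fin d)} (h₁ : IsWalk C i k l₁)
    (h₂ : IsWalk C k j l₂) : IsWalk C i j (l₁ ++ l₂) := by
  induction l₁ generalizing i with
  | nil => cases h₁; exact h₂
  | cons a t ih => exact ⟨h₁.1, ih h₁.2⟩

theorem Reach.trans {i j k : Fin d} (h₁ : Reach C i k) (h₂ : Reach C k j) : Reach C i j := by
  obtain ⟨l₁, hne, hw₁⟩ := h₁
  obtain ⟨l₂, -, hw₂⟩ := h₂
  exact ⟨l₁ ++ l₂, by simp [hne], hw₁.append hw₂⟩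

theorem IsWalk.reach_of_mem {i j m : Fin d} {l : List (Fin d)} (h : IsWalk C i j l)
    (hm : m ∈ l) : Reach C i m := by
  induction l generalizing i with
  | nil => cases hm
  | cons a t ih =>
    rcases List.mem_cons.1 hm with rfl | hmt
    · exact ⟨[m], List.cons_ne_nil _ _, h.1, rfl⟩
    · obtain ⟨l', -, hw⟩ := ih h.2 hmt
      exact ⟨a :: l', List.cons_ne_nil _ _, h.1, hw⟩

theorem not_reach_self (hacyc : Acyclic C) (k : Fin d) : ¬ Reach C k k :=
  fun ⟨l, hne, hw⟩ => hne (hacyc k l hw)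

theorem Reach.asymm (hacyc : Acyclic C) {i j : Fin d} (h₁ : Reach C i j) : ¬ Reach C j i :=
  fun h₂ => not_reach_self hacyc i (h₁.trans h₂)

theorem IsWalk.nodup (hacyc : Acyclic C) {i j : Fin d} {l : List (Fin d)}
    (h : IsWalk C i j l) : l.Nodup := by
  induction l generalizing i with
  | nil => exact List.nodup_nil
  | cons a t ih =>
    refine List.nodup_cons.2 ⟨fun hat => ?_, ih h.2⟩
    exact not_reach_self hacyc a (h.2.reach_of_mem hat)

theorem finite_setOf_isWalk (hacyc : Acyclic C) (i j : Fin d) :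
    {l | IsWalk C i j l}.Finite :=
  (List.finite_length_le (Fin d) d).subset fun l hl => by
    simpa using (hl.nodup hacyc).length_le_card

end Walks

section Weights

variable {d : ℕ} {C : Matrix (Fin d) (Fin d) NNReal} {ε : Fin d → NNReal}

theorem noisyWeight_append {i k : Fin d} {l₁ : List (Fin d)} (h₁ : IsWalk C i k l₁)
    (l₂ : List (Fin d)) :
    noisyWeight C ε i (l₁ ++ l₂) = noisyWeight C ε i l₁ * noisyWeight C ε k l₂ := by
  induction l₁ generalizing i with
  | nil => cases h₁; simp [noisyWeight]
  | cons a t ih => simp [noisyWeight, ih h₁.2, mul_assoc]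

theorem mul_noisyWeight_append {i k : Fin d} {l₁ : List (Fin d)} (h₁ : IsWalk C i k l₁)
    (hk : ε k ≠ 0) (l₂ : List (Fin d)) :
    ε i * noisyWeight C ε i (l₁ ++ l₂) =
      ε i * noisyWeight C ε i l₁ * (ε k * noisyWeight C ε k l₂) / ε k := by
  rw [noisyWeight_append h₁, mul_div_assoc, mul_div_right_comm, div_self hk, one_mul, mul_assoc]

theorem walkWeight_le_noisyWeight (hε : ∀ k, 1 ≤ ε k) (i : Fin d) (l : List (Fin d)) :
    walkWeight C i l ≤ noisyWeight C ε i l := by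
  induction l generalizing i with
  | nil => exact le_rfl
  | cons a t ih =>
    calc C i a * walkWeight C a t ≤ C i a * ε a * noisyWeight C ε a t := by
          rw [mul_assoc]
          gcongr
          exact le_mul_of_one_le_of_le (hε a) (ih a)

theorem walkWeight_mul_le_noisyWeight (hε : ∀ k, 1 ≤ ε k) {i j : Fin d} {l : List (Fin d)}
    (h : IsWalk C i j l) (hne : l ≠ []) : walkWeight C i l * ε j ≤ noisyWeight C ε i l := by
  induction l generalizing i with
  | nil => exact absurd rfl hne
  | cons a t ih =>
    obtain ⟨-, ht⟩ := h
    rcases eq_or_ne t [] with rfl | hte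
    · cases ht
      simp [walkWeight, noisyWeight]
    · calc C i a * walkWeight C a t * ε j ≤ C i a * noisyWeight C ε a t := by
            rw [mul_assoc]; gcongr; exact ih ht hte
        _ ≤ C i a * ε a * noisyWeight C ε a t := by
            rw [mul_assoc]; gcongr; exact le_mul_of_one_le_left zero_le (hε a)

end Weights

section Coefficients

variable {d : ℕ} {C : Matrix (Fin d) (Fin d) NNReal} {ε : Fin d → NNReal}

theorem le_detB (hacyc : Acyclic C) {j i : Fin d} {l : List (Fin d)} (hl : IsWalk C j i l) :
    walkWeight C j l ≤ detB C j i :=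
  le_sSup_setOf_of_finite _ (finite_setOf_isWalk hacyc j i) hl

theorem le_barB (hacyc : Acyclic C) {j i : Fin d} {l : List (Fin d)} (hl : IsWalk C j i l) :
    ε j * noisyWeight C ε j l ≤ barB C ε j i :=
  le_sSup_setOf_of_finite (fun l => ε j * noisyWeight C ε j l)
    (finite_setOf_isWalk hacyc j i) hl

theorem exists_barB_eq (hacyc : Acyclic C) {j i : Fin d} {l : List (Fin d)}
    (hl : IsWalk C j i l) : ∃ l, IsWalk C j i l ∧ barB C ε j i = ε j * noisyWeight C ε j l :=
  exists_sSup_setOf_eq_of_finite (fun l => ε j * noisyWeight C ε j l)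
    (finite_setOf_isWalk hacyc j i) ⟨l, hl⟩

theorem detB_self (hacyc : Acyclic C) (k : Fin d) : detB C k k = 1 :=
  le_antisymm (csSup_le' fun _ ⟨l, hl, hw⟩ => by cases hacyc k l hl; exact hw.le)
    (le_detB (l := []) hacyc rfl)

theorem barB_self (hacyc : Acyclic C) (k : Fin d) : barB C ε k k = ε k :=
  le_antisymm
    (csSup_le' fun _ ⟨l, hl, hw⟩ => by cases hacyc k l hl; simp [hw, noisyWeight])
    (by simpa [noisyWeight] using le_barB (l := []) (ε := ε) hacyc rfl)

theorem mul_detB_le_barB (hacyc : Acyclic C) (hε : ∀ k, 1 ≤ ε k) (j i : Fin d) :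
    ε j * detB C j i ≤ barB C ε j i := by
  have hj : 0 < ε j := zero_lt_one.trans_le (hε j)
  rw [← le_div_iff₀' hj]
  refine csSup_le' fun _ ⟨l, hl, hw⟩ => ?_
  rw [hw, le_div_iff₀' hj]
  exact (mul_le_mul_right (walkWeight_le_noisyWeight hε j l) _).trans (le_barB hacyc hl)

theorem mul_detB_mul_le_barB (hacyc : Acyclic C) (hε : ∀ k, 1 ≤ ε k) {j i : Fin d}
    (hji : j ≠ i) : ε j * detB C j i * ε i ≤ barB C ε j i := by
  have hpos : 0 < ε j * ε i := mul_pos (zero_lt_one.trans_le (hε j)) (zero_lt_one.trans_le (hε i))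
  have hswap : ∀ x, ε j * x * ε i = ε j * ε i * x := fun x => by ring
  rw [hswap, ← le_div_iff₀' hpos]
  refine csSup_le' fun _ ⟨l, hl, hw⟩ => ?_
  have hne : l ≠ [] := by rintro rfl; exact hji hl
  rw [hw, le_div_iff₀' hpos, ← hswap, mul_assoc]
  exact (mul_le_mul_right (walkWeight_mul_le_noisyWeight hε hl hne) _).trans (le_barB hacyc hl)

theorem barB_mul_barB_div_le (hacyc : Acyclic C) (hε : ∀ k, 1 ≤ ε k) {j k i : Fin d}
    {p q : List (Fin d)} (hp : IsWalk C j k p) (hq : IsWalk C k i q) :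
    barB C ε j k * barB C ε k i / barB C ε k k ≤ barB C ε j i := by
  obtain ⟨p, hp, hbp⟩ := exists_barB_eq (ε := ε) hacyc hp
  obtain ⟨q, hq, hbq⟩ := exists_barB_eq (ε := ε) hacyc hq
  have hk : ε k ≠ 0 := (zero_lt_one.trans_le (hε k)).ne'
  rw [barB_self hacyc, hbp, hbq, ← mul_noisyWeight_append hp hk]
  exact le_barB hacyc (hp.append hq)

end Coefficients

section SupOver

variable {d : ℕ} {P : Fin d → Prop} {f : Fin d → NNReal}

theorem le_supOver {k : Fin d} (hk : P k) : f k ≤ supOver P f :=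
  le_sSup_setOf_of_finite f (Set.toFinite _) hk

theorem exists_supOver_eq (hpos : 0 < supOver P f) : ∃ k, P k ∧ supOver P f = f k := by
  refine exists_sSup_setOf_eq_of_finite f (Set.toFinite _) ?_
  by_contra! hP
  simp [supOver, hP] at hpos

end SupOver

section Identity

variable {d : ℕ} {C : Matrix (Fin d) (Fin d) NNReal} {ε : Fin d → NNReal}

theorem exists_reach_reach_of_detB_pos {j i : Fin d} (hacyc : Acyclic C)
    (hdet : detB C j i = supOver (fun k => Reach C j k ∧ Reach C k i)
      (fun k => detB C j k * detB C k i / detB C k k)) (hpos : 0 < detB C j i) :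
    ∃ k, Reach C j k ∧ Reach C k i ∧ detB C j i = detB C j k * detB C k i := by
  obtain ⟨k, ⟨hjk, hki⟩, hk⟩ := exists_supOver_eq (hdet ▸ hpos)
  exact ⟨k, hjk, hki, by rw [hdet, hk, detB_self hacyc, div_one]⟩

theorem exists_edge_weight_le_barB_mul_barB_div (hacyc : Acyclic C) (hε : ∀ k, 1 ≤ ε k)
    {j i : Fin d}
    (hdet : detB C j i = supOver (fun k => Reach C j k ∧ Reach C k i)
      (fun k => detB C j k * detB C k i / detB C k k)) (hC : 0 < C j i) :
    ∃ k, Reach C j k ∧ Reach C k i ∧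
      ε j * (C j i * ε i) ≤ barB C ε j k * barB C ε k i / barB C ε k k := by
  have hCle : C j i ≤ detB C j i := by
    simpa [walkWeight] using le_detB (l := [i]) hacyc ⟨hC, rfl⟩
  obtain ⟨k, hjk, hki, hk⟩ := exists_reach_reach_of_detB_pos hacyc hdet (hC.trans_le hCle)
  have hki' : k ≠ i := by rintro rfl; exact not_reach_self hacyc k hki
  have hεk : ε k ≠ 0 := (zero_lt_one.trans_le (hε k)).ne'
  refine ⟨k, hjk, hki, ?_⟩
  calc ε j * (C j i * ε i) ≤ ε j * (detB C j k * detB C k i * ε i) := by rw [← hk]; gcongr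
    _ = ε j * detB C j k * (ε k * detB C k i * ε i) / ε k := by field_simp
    _ ≤ barB C ε j k * barB C ε k i / barB C ε k k := by
        rw [barB_self hacyc]
        gcongr
        exacts [mul_detB_le_barB hacyc hε j k, mul_detB_mul_le_barB hacyc hε hki']

theorem barB_eq_supOver_of_detB_eq (hacyc : Acyclic C) (hε : ∀ k, 1 ≤ ε k) {j i : Fin d}
    (hdet : detB C j i = supOver (fun k => Reach C j k ∧ Reach C k i)
      (fun k => detB C j k * detB C k i / detB C k k)) :
    barB C ε j i = supOver (fun k => Reach C j k ∧ Reach C k i)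
      (fun k => barB C ε j k * barB C ε k i / barB C ε k k) := by
  refine le_antisymm (csSup_le' ?_) (csSup_le' ?_)
  · rintro _ ⟨l, hl, rfl⟩
    suffices ∃ k, Reach C j k ∧ Reach C k i ∧
        ε j * noisyWeight C ε j l ≤ barB C ε j k * barB C ε k i / barB C ε k k by
      obtain ⟨k, hjk, hki, hle⟩ := this
      exact hle.trans (le_supOver (f := fun k => barB C ε j k * barB C ε k i / barB C ε k k)
        (P := fun k => Reach C j k ∧ Reach C k i) ⟨hjk, hki⟩)
    match l, hl with
    | [], hji =>
      cases hji
      obtain ⟨k, hjk, hkj, -⟩ := exists_reach_reach_of_detB_pos hacyc hdet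
        (by rw [detB_self hacyc]; exact one_pos)
      exact absurd hkj (hjk.asymm hacyc)
    | [a], ⟨hC, hai⟩ =>
      cases hai
      simpa [noisyWeight] using exists_edge_weight_le_barB_mul_barB_div hacyc hε hdet hC
    | a :: b :: t, ⟨hC, ht⟩ =>
      have hεa : ε a ≠ 0 := (zero_lt_one.trans_le (hε a)).ne'
      have hja : IsWalk C j a [a] := ⟨hC, rfl⟩
      refine ⟨a, ⟨[a], List.cons_ne_nil _ _, hja⟩, ⟨b :: t, List.cons_ne_nil _ _, ht⟩, ?_⟩
      rw [barB_self hacyc, ← List.singleton_append, mul_noisyWeight_append hja hεa]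
      gcongr
      exacts [le_barB hacyc hja, le_barB hacyc ht]
  · rintro _ ⟨k, ⟨⟨p, -, hp⟩, ⟨q, -, hq⟩⟩, rfl⟩
    exact barB_mul_barB_div_le hacyc hε hp hq

end Identity

theorem det_identity_implies_random_identity_general (d : ℕ) (C : Matrix (Fin d) (Fin d) NNReal)
    (hacyc : Acyclic C) {Ω : Type} [MeasurableSpace Ω] (μ : Measure Ω)
    (ε : Fin d → Ω → NNReal) (hε : ∀ k ω, 1 ≤ ε k ω)
    (j i : Fin d)
    (hdet : detB C j i = supOver (fun k => Reach C j k ∧ Reach C k i)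
      (fun k => detB C j k * detB C k i / detB C k k)) :
    ∀ᵐ ω ∂μ, barB C (fun k => ε k ω) j i =
      supOver (fun k => Reach C j k ∧ Reach C k i)
        (fun k => barB C (fun k' => ε k' ω) j k * barB C (fun k' => ε k' ω) k i /
          barB C (fun k' => ε k' ω) k k) := by
  exact ae_of_all μ fun ω => barB_eq_supOver_of_detB_eq hacyc (fun k => hε k ω) hdet

/-- if the deterministic coefficients satisfy
`b_{ji} = ⋁_{k ∈ de(j)∩an(i)} b_{jk} b_{ki} / b_{kk}`, then almost surely the random
coefficients satisfy the analogous identity. -/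
theorem det_identity_implies_random_identity (d : ℕ) (C : Matrix (Fin d) (Fin d) NNReal)
    (hacyc : Acyclic C) {Ω : Type} [MeasurableSpace Ω] (μ : Measure Ω)
    [IsProbabilityMeasure μ] (ε : Fin d → Ω → NNReal) (hε : ∀ k ω, 1 ≤ ε k ω)
    (j i : Fin d)
    (hdet : detB C j i = supOver (fun k => Reach C j k ∧ Reach C k i)
      (fun k => detB C j k * detB C k i / detB C k k)) :
    ∀ᵐ ω ∂μ, barB C (fun k => ε k ω) j i =
      supOver (fun k => Reach C j k ∧ Reach C k i)
        (fun k => barB C (fun k' => ε k' ω) j k * barB C (fun k' => ε k' ω) k i /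
          barB C (fun k' => ε k' ω) k k) :=
  det_identity_implies_random_identity_general d C hacyc μ ε hε j i hdet
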